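/- arXiv:2501.06147 — 6 statements merged into one kernel-verified Lean document; each statement's English description precedes it below -/
import Mathlib

section
/- For every k ∈ ℤ and every (k1,k2,k3) ∈ Γ(k), one has |φ̃| ≥ k_m. -/
lemma stmt1_aux (a b c x : ℤ) (h1 : 1 ≤ |a|) (h2 : 1 ≤ |b|) (h3 : 1 ≤ |c|)
    (hs : 2 * |x| ≤ |a| + |b| + |c|) : |x| ≤ |3 * a * b * c| := by
  have habs : |3 * a * b * c| = 3 * (|a| * |b| * |c|) := by
    rw [abs_mul, abs_mul, abs_mul]
    norm_num
    ring
  rw [habs]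
  nlinarith [abs_nonneg x, mul_nonneg (sub_nonneg.2 h2) (sub_nonneg.2 h3),
    mul_nonneg (sub_nonneg.2 h1) (sub_nonneg.2 h3),
    mul_nonneg (sub_nonneg.2 h1) (sub_nonneg.2 h2),
    mul_nonneg (mul_nonneg (sub_nonneg.2 h1) (sub_nonneg.2 h2)) (sub_nonneg.2 h3)]

theorem stmt1 (k k1 k2 k3 : ℤ) (h : k1 + k2 + k3 = k)
    (hne : (k1 + k2) * (k1 + k3) * (k2 + k3) ≠ 0) :
    max |k| (max |k1| (max |k2| |k3|)) ≤ |3 * (k1 + k2) * (k1 + k3) * (k2 + k3)| := by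
  obtain ⟨hab, hc⟩ := mul_ne_zero_iff.mp hne
  obtain ⟨ha, hb⟩ := mul_ne_zero_iff.mp hab
  have h1 : 1 ≤ |k1 + k2| := Int.one_le_abs ha
  have h2 : 1 ≤ |k1 + k3| := Int.one_le_abs hb
  have h3 : 1 ≤ |k2 + k3| := Int.one_le_abs hc
  have key : ∀ x : ℤ, 2 * |x| ≤ |k1 + k2| + |k1 + k3| + |k2 + k3| →
      |x| ≤ |3 * (k1 + k2) * (k1 + k3) * (k2 + k3)| := fun x hx =>
    stmt1_aux (k1 + k2) (k1 + k3) (k2 + k3) x h1 h2 h3 hx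
  simp only [max_le_iff]
  refine ⟨key k ?_, key k1 ?_, key k2 ?_, key k3 ?_⟩
  · have e : 2 * k = (k1 + k2) + (k1 + k3) + (k2 + k3) := by linarith
    have t1 := abs_add_le ((k1 + k2) + (k1 + k3)) (k2 + k3)
    have t2 := abs_add_le (k1 + k2) (k1 + k3)
    have he : |2 * k| = 2 * |k| := by rw [abs_mul]; norm_num
    rw [← he, e]
    linarith
  · have e : 2 * k1 = (k1 + k2) + (k1 + k3) - (k2 + k3) := by ring
    have t1 := abs_sub ((k1 + k2) + (k1 + k3)) (k2 + k3)
    have t2 := abs_add_le (k1 + k2) (k1 + k3)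
    have he : |2 * k1| = 2 * |k1| := by rw [abs_mul]; norm_num
    rw [← he, e]
    linarith
  · have e : 2 * k2 = (k1 + k2) - (k1 + k3) + (k2 + k3) := by ring
    have t1 := abs_add_le ((k1 + k2) - (k1 + k3)) (k2 + k3)
    have t2 := abs_sub (k1 + k2) (k1 + k3)
    have he : |2 * k2| = 2 * |k2| := by rw [abs_mul]; norm_num
    rw [← he, e]
    linarith
  · have e : 2 * k3 = (k1 + k3) - (k1 + k2) + (k2 + k3) := by ring
    have t1 := abs_add_le ((k1 + k3) - (k1 + k2)) (k2 + k3)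
    have t2 := abs_sub (k1 + k3) (k1 + k2)
    have he : |2 * k3| = 2 * |k3| := by rw [abs_mul]; norm_num
    rw [← he, e]
    linarith
end

section
/- There exist constants c > 0 and C ≥ 1 such that: for every k ∈ ℤ and every (k1,k2,k3) ∈ Γ(k) with |φ̃| ≤ c·k_m², one has k_m ≤ C·min(|k|, |k1|, |k2|, |k3|); in particular |k|, |k1|, |k2|, |k3| are all comparable to k_m up to the factor C. -/
lemma pairlem_aux (m x y z : ℤ) (hm : 0 ≤ m) (hz : 1 ≤ z) (hx : m < 10 * x) (hy : m < 10 * y)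
    (key : 100 * (3 * (x * (y * z))) ≤ 3 * m ^ 2) : False := by
  have hx0 : 1 ≤ x := by omega
  have hy0 : 1 ≤ y := by omega
  have h1 : (m + 1) * (m + 1) ≤ (10 * x) * (10 * y) :=
    mul_le_mul (by omega) (by omega) (by omega) (by omega)
  have h2 : x * y * 1 ≤ x * y * z :=
    mul_le_mul_of_nonneg_left hz (by positivity)
  nlinarith

lemma pivot_lem (j x y m mn : ℤ)
    (hm : m = max |j + x + y| (max |j| (max |x| |y|)))
    (hmn : mn = min |j + x + y| (min |j| (min |x| |y|)))
    (h1 : 10 * |j + x| ≤ m) (h2 : 10 * |j + y| ≤ m) :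
    m ≤ 2 * mn := by
  -- triangle inequalities
  have t1 : |x| ≤ |j + x| + |j| := by
    have h := abs_add_le (j + x) (-j)
    rwa [show j + x + -j = x from by ring, abs_neg] at h
  have t2 : |y| ≤ |j + y| + |j| := by
    have h := abs_add_le (j + y) (-j)
    rwa [show j + y + -j = y from by ring, abs_neg] at h
  have t3 : |j + x + y| ≤ |j + x| + |j + y| + |j| := by
    have ha := abs_add_le (j + x) (j + y)
    have hb := abs_add_le ((j + x) + (j + y)) (-j)
    rw [show (j + x) + (j + y) + -j = j + x + y from by ring, abs_neg] at hb
    linarith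
  have s1 : |j| ≤ |j + x| + |x| := by
    have h := abs_add_le (j + x) (-x)
    rwa [show j + x + -x = j from by ring, abs_neg] at h
  have s2 : |j| ≤ |j + y| + |y| := by
    have h := abs_add_le (j + y) (-y)
    rwa [show j + y + -y = j from by ring, abs_neg] at h
  have s3 : |j| ≤ |j + x| + |j + y| + |j + x + y| := by
    have ha := abs_add_le (j + x) (j + y)
    have hb := abs_add_le ((j + x) + (j + y)) (-(j + x + y))
    rw [show (j + x) + (j + y) + -(j + x + y) = j from by ring, abs_neg] at hb
    linarith
  have hjm : |j| ≤ m := by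
    rw [hm]; exact le_trans (le_max_left _ _) (le_max_right _ _)
  have hj0 : 0 ≤ |j| := abs_nonneg j
  have hup : m ≤ |j| + (|j + x| + |j + y|) := by
    rw [hm]
    refine max_le (by linarith) (max_le (by linarith [abs_nonneg (j+x), abs_nonneg (j+y)])
      (max_le (by linarith [abs_nonneg (j+y)]) (by linarith [abs_nonneg (j+x)])))
  have hlo : |j| - (|j + x| + |j + y|) ≤ mn := by
    rw [hmn]
    refine le_min (by linarith) (le_min (by linarith [abs_nonneg (j+x), abs_nonneg (j+y)])
      (le_min (by linarith [abs_nonneg (j+y)]) (by linarith [abs_nonneg (j+x)])))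
  linarith

theorem stmt2 :
    ∃ c : ℝ, 0 < c ∧ ∃ C : ℝ, 1 ≤ C ∧
      ∀ k k1 k2 k3 : ℤ, k1 + k2 + k3 = k →
        (k1 + k2) * (k1 + k3) * (k2 + k3) ≠ 0 →
        ((|3 * (k1 + k2) * (k1 + k3) * (k2 + k3)| : ℤ) : ℝ) ≤
            c * ((max |k| (max |k1| (max |k2| |k3|)) : ℤ) : ℝ) ^ 2 →
        ((max |k| (max |k1| (max |k2| |k3|)) : ℤ) : ℝ) ≤
            C * ((min |k| (min |k1| (min |k2| |k3|)) : ℤ) : ℝ) := by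
  refine ⟨3/100, by norm_num, 2, by norm_num, ?_⟩
  intro k k1 k2 k3 hsum hne h
  set m : ℤ := max |k| (max |k1| (max |k2| |k3|)) with hm
  set mn : ℤ := min |k| (min |k1| (min |k2| |k3|)) with hmn
  -- move hypothesis to ℤ
  have key : (100:ℤ) * |3 * (k1 + k2) * (k1 + k3) * (k2 + k3)| ≤ 3 * m ^ 2 := by
    rw [← @Int.cast_le ℝ]
    push_cast
    push_cast at h
    linarith
  -- reduce goal to ℤ
  suffices hgoal : m ≤ 2 * mn by
    have : ((m : ℤ) : ℝ) ≤ ((2 * mn : ℤ) : ℝ) := by exact_mod_cast hgoal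
    push_cast at this; linarith
  have hd : (k1 + k2) ≠ 0 := fun h0 => hne (by rw [h0]; ring)
  have hb : (k1 + k3) ≠ 0 := fun h0 => hne (by rw [h0]; ring)
  have ha : (k2 + k3) ≠ 0 := fun h0 => hne (by rw [h0]; ring)
  have ha1 : 1 ≤ |k2 + k3| := Int.one_le_abs (by omega)
  have hb1 : 1 ≤ |k1 + k3| := Int.one_le_abs (by omega)
  have hd1 : 1 ≤ |k1 + k2| := Int.one_le_abs (by omega)
  have hm0 : 0 ≤ m := le_trans (abs_nonneg k) (le_max_left _ _)
  have habs : |3 * (k1 + k2) * (k1 + k3) * (k2 + k3)|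
      = 3 * (|k1 + k2| * (|k1 + k3| * |k2 + k3|)) := by
    rw [abs_mul, abs_mul, abs_mul]
    simp [abs_of_nonneg, mul_assoc]
  rw [habs] at key
  -- among any two of the three factors, one is ≤ m/10
  have pDB : 10 * |k1 + k2| ≤ m ∨ 10 * |k1 + k3| ≤ m := by
    by_contra hc; push_neg at hc; obtain ⟨h1, h2⟩ := hc
    exact pairlem_aux m _ _ _ hm0 ha1 h1 h2 key
  have pDA : 10 * |k1 + k2| ≤ m ∨ 10 * |k2 + k3| ≤ m := by
    by_contra hc; push_neg at hc; obtain ⟨h1, h2⟩ := hc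
    refine pairlem_aux m _ _ _ hm0 hb1 h1 h2 ?_
    rw [show |k1 + k2| * (|k2 + k3| * |k1 + k3|)
        = |k1 + k2| * (|k1 + k3| * |k2 + k3|) from by ring]
    exact key
  have pBA : 10 * |k1 + k3| ≤ m ∨ 10 * |k2 + k3| ≤ m := by
    by_contra hc; push_neg at hc; obtain ⟨h1, h2⟩ := hc
    refine pairlem_aux m _ _ _ hm0 hd1 h1 h2 ?_
    rw [show |k1 + k3| * (|k2 + k3| * |k1 + k2|)
        = |k1 + k2| * (|k1 + k3| * |k2 + k3|) from by ring]
    exact key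
  rcases pDB with hD | hB
  · rcases pBA with hB' | hA'
    · -- |k1+k2|, |k1+k3| small: pivot j = k1, x = k2, y = k3
      refine pivot_lem k1 k2 k3 m mn ?_ ?_ hD hB'
      · rw [hm, hsum]
      · rw [hmn, hsum]
    · -- |k1+k2|, |k2+k3| small: pivot j = k2, x = k1, y = k3
      refine pivot_lem k2 k1 k3 m mn ?_ ?_
        (by rwa [show k2 + k1 = k1 + k2 from by ring]) hA'
      · rw [hm, show k = k2 + k1 + k3 from by omega]
        rw [show max |k1| (max |k2| |k3|) = max |k2| (max |k1| |k3|) from max_left_comm _ _ _]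
      · rw [hmn, show k = k2 + k1 + k3 from by omega]
        rw [show min |k1| (min |k2| |k3|) = min |k2| (min |k1| |k3|) from min_left_comm _ _ _]
  · rcases pDA with hD' | hA'
    · -- |k1+k2|, |k1+k3| small again
      refine pivot_lem k1 k2 k3 m mn ?_ ?_ hD' hB
      · rw [hm, hsum]
      · rw [hmn, hsum]
    · -- |k1+k3|, |k2+k3| small: pivot j = k3, x = k1, y = k2
      refine pivot_lem k3 k1 k2 m mn ?_ ?_
        (by rwa [show k3 + k1 = k1 + k3 from by ring])
        (by rwa [show k3 + k2 = k2 + k3 from by ring])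
      · rw [hm, show k = k3 + k1 + k2 from by omega]
        rw [show max |k1| (max |k2| |k3|) = max |k3| (max |k1| |k2|) from by
          rw [max_comm |k2| |k3|, max_left_comm]]
      · rw [hmn, show k = k3 + k1 + k2 from by omega]
        rw [show min |k1| (min |k2| |k3|) = min |k3| (min |k1| |k2|) from by
          rw [min_comm |k2| |k3|, min_left_comm]]
end

section
/- Let s > −1/2. There exists a constant C = C(s) > 0 such that for all nonnegative sequences a, b, c : ℤ → [0,∞), the sequence F : ℤ → [0,∞] defined by F_0 = 0 and, for k ≠ 0, F_k = Σ a(k1)·b(k2)·c(k3)/|k3|, where the sum ranges over all triples (k1,k2,k3) ∈ Γ0(k) with k1 + k2 ≠ 0 and k3 ≠ 0, satisfies ‖F‖_{H^s} ≤ C·‖a‖_{H^s}·‖b‖_{H^s}·‖c‖_{H^s} (the inequality holding in [0,∞]). -/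
/-!
On the resonant set `Γ₀(k)` the constraint `k₁ + k₂ ≠ 0` forces `k₁ = -k₃` (and then `k₂ = k`)
or `k₂ = -k₃` (and then `k₁ = k`). Hence `F k ≤ P(a, c) b k + P(b, c) a k`, where
`P(u, v) = ∑_{m ≠ 0} u(-m) v(m) / |m|`. Since `1 / |m| ≤ 2 (1 + m²)^s` for `s ≥ -1/2`,
Cauchy–Schwarz gives `P(u, v) ≤ 2 ‖u‖_{H^s} ‖v‖_{H^s}`, and the triangle inequality for the
`H^s` norm yields the estimate with `C = 4`.
-/

open scoped ENNReal

/-- The `H^s` norm of a sequence indexed by `ℤ`, with values in `[0,∞]`. -/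
noncomputable def HsE (s : ℝ) (a : ℤ → ℝ≥0∞) : ℝ≥0∞ :=
  (∑' k : ℤ, ENNReal.ofReal ((1 + (k : ℝ) ^ 2) ^ s) * a k ^ 2) ^ (1 / 2 : ℝ)

open MeasureTheory Function

namespace ENNReal

variable {ι : Type*}

theorem inner_le_Lp_mul_Lq_tsum {p q : ℝ} (hpq : p.HolderConjugate q) (f g : ι → ℝ≥0∞) :
    ∑' i, f i * g i ≤ (∑' i, f i ^ p) ^ (1 / p) * (∑' i, g i ^ q) ^ (1 / q) := by
  let _ : MeasurableSpace ι := ⊤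
  have : MeasurableSingletonClass ι := ⟨fun _ => trivial⟩
  simpa only [Pi.mul_apply, lintegral_count] using
    lintegral_mul_le_Lp_mul_Lq Measure.count hpq (measurable_from_top (f := f)).aemeasurable
      (measurable_from_top (f := g)).aemeasurable

theorem Lp_add_le_tsum {p : ℝ} (hp : 1 ≤ p) (f g : ι → ℝ≥0∞) :
    (∑' i, (f i + g i) ^ p) ^ (1 / p) ≤ (∑' i, f i ^ p) ^ (1 / p) + (∑' i, g i ^ p) ^ (1 / p) := by
  let _ : MeasurableSpace ι := ⊤
  have : MeasurableSingletonClass ι := ⟨fun _ => trivial⟩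
  simpa only [Pi.add_apply, lintegral_count] using
    lintegral_Lp_add_le (μ := Measure.count) (measurable_from_top (f := f)).aemeasurable
      (measurable_from_top (f := g)).aemeasurable hp

theorem tsum_le_tsum_comp_add_tsum_comp {α β γ : Type*} {f : α → ℝ≥0∞} {e₁ : β → α}
    {e₂ : γ → α} (he₁ : Injective e₁) (he₂ : Injective e₂)
    (hf : support f ⊆ Set.range e₁ ∪ Set.range e₂) :
    ∑' x, f x ≤ ∑' y, f (e₁ y) + ∑' z, f (e₂ z) := by
  rw [← tsum_subtype_eq_of_support_subset hf, ← tsum_range f he₁, ← tsum_range f he₂]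
  exact tsum_union_le f _ _

end ENNReal

noncomputable def sobolevWeight (s : ℝ) (k : ℤ) : ℝ≥0∞ :=
  ENNReal.ofReal ((1 + (k : ℝ) ^ 2) ^ (s / 2))

lemma sobolevWeight_neg (s : ℝ) (k : ℤ) : sobolevWeight s (-k) = sobolevWeight s k := by
  simp [sobolevWeight]

lemma sobolevWeight_sq (s : ℝ) (k : ℤ) :
    sobolevWeight s k ^ 2 = ENNReal.ofReal ((1 + (k : ℝ) ^ 2) ^ s) := by
  rw [sobolevWeight, ← ENNReal.ofReal_pow (by positivity), ← Real.rpow_natCast,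
    ← Real.rpow_mul (by positivity)]
  norm_num

lemma HsE_eq_tsum_rpow (s : ℝ) (f : ℤ → ℝ≥0∞) :
    HsE s f = (∑' k, (sobolevWeight s k * f k) ^ (2 : ℝ)) ^ (1 / (2 : ℝ)) := by
  simp only [HsE, ENNReal.rpow_two, mul_pow, sobolevWeight_sq]

lemma HsE_mono {s : ℝ} {f g : ℤ → ℝ≥0∞} (h : f ≤ g) : HsE s f ≤ HsE s g := by
  unfold HsE
  gcongr with k
  exact h k

lemma HsE_const_mul (s : ℝ) (t : ℝ≥0∞) (f : ℤ → ℝ≥0∞) :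
    HsE s (fun k => t * f k) = t * HsE s f := by
  simp only [HsE_eq_tsum_rpow, mul_left_comm _ t, ENNReal.mul_rpow_of_nonneg _ _ zero_le_two,
    ENNReal.tsum_mul_left]
  rw [ENNReal.mul_rpow_of_nonneg _ _ (by norm_num), ← ENNReal.rpow_mul]
  norm_num

lemma HsE_add_le (s : ℝ) (f g : ℤ → ℝ≥0∞) :
    HsE s (f + g) ≤ HsE s f + HsE s g := by
  simpa only [HsE_eq_tsum_rpow, Pi.add_apply, mul_add] using
    ENNReal.Lp_add_le_tsum one_le_two (fun k => sobolevWeight s k * f k)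
      (fun k => sobolevWeight s k * g k)

lemma HsE_comp_neg (s : ℝ) (f : ℤ → ℝ≥0∞) : HsE s (fun k => f (-k)) = HsE s f := by
  rw [HsE_eq_tsum_rpow, HsE_eq_tsum_rpow,
    ← (Equiv.neg ℤ).tsum_eq fun k => (sobolevWeight s k * f k) ^ (2 : ℝ)]
  simp [sobolevWeight_neg]

lemma inv_abs_le_two_mul_rpow {s : ℝ} (hs : -(1 / 2 : ℝ) ≤ s) {x : ℝ} (hx : 1 ≤ |x|) :
    |x|⁻¹ ≤ 2 * (1 + x ^ 2) ^ s := by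
  have hx2 : 1 ≤ x ^ 2 := by nlinarith [sq_abs x]
  have hsqrt : √(1 + x ^ 2) ≤ 2 * |x| := by
    rw [Real.sqrt_le_iff, mul_pow, sq_abs]
    constructor <;> linarith [abs_nonneg x]
  calc |x|⁻¹ = 2 * (2 * |x|)⁻¹ := by field_simp
    _ ≤ 2 * (√(1 + x ^ 2))⁻¹ := by gcongr
    _ = 2 * (1 + x ^ 2) ^ (-(1 / 2) : ℝ) := by
      rw [Real.sqrt_eq_rpow, Real.rpow_neg (by positivity)]
    _ ≤ 2 * (1 + x ^ 2) ^ s := by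
      gcongr
      linarith

noncomputable def resonantPairing (u v : ℤ → ℝ≥0∞) : ℝ≥0∞ :=
  ∑' m : ℤ, if m = 0 then 0 else u (-m) * v m / m.natAbs

lemma natAbs_inv_le_two_mul_sobolevWeight_sq {s : ℝ} (hs : -(1 / 2 : ℝ) ≤ s) {m : ℤ}
    (hm : m ≠ 0) : (m.natAbs : ℝ≥0∞)⁻¹ ≤ 2 * sobolevWeight s m ^ 2 := by
  have hm1 : (1 : ℝ) ≤ |(m : ℝ)| := by exact_mod_cast Int.one_le_abs hm
  rw [sobolevWeight_sq, ← ENNReal.ofReal_natCast, Nat.cast_natAbs, Int.cast_abs,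
    ← ENNReal.ofReal_inv_of_pos (by linarith), ← ENNReal.ofReal_ofNat 2,
    ← ENNReal.ofReal_mul zero_le_two]
  exact ENNReal.ofReal_le_ofReal (inv_abs_le_two_mul_rpow hs hm1)

lemma resonantPairing_le {s : ℝ} (hs : -(1 / 2 : ℝ) ≤ s) (u v : ℤ → ℝ≥0∞) :
    resonantPairing u v ≤ 2 * HsE s u * HsE s v := by
  set w := sobolevWeight s
  have hterm (m : ℤ) : (if m = 0 then 0 else u (-m) * v m / m.natAbs) ≤
      2 * ((w m * u (-m)) * (w m * v m)) := by
    split_ifs with hm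
    · exact zero_le
    calc u (-m) * v m / m.natAbs = (m.natAbs : ℝ≥0∞)⁻¹ * (u (-m) * v m) := by
          rw [div_eq_mul_inv, mul_comm]
      _ ≤ 2 * w m ^ 2 * (u (-m) * v m) := by
          gcongr
          exact natAbs_inv_le_two_mul_sobolevWeight_sq hs hm
      _ = 2 * ((w m * u (-m)) * (w m * v m)) := by ring
  calc resonantPairing u v ≤ ∑' m, 2 * ((w m * u (-m)) * (w m * v m)) :=
        ENNReal.tsum_le_tsum hterm
    _ = 2 * ∑' m, (w m * u (-m)) * (w m * v m) := ENNReal.tsum_mul_left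
    _ ≤ 2 * (HsE s (fun k => u (-k)) * HsE s v) := by
        rw [HsE_eq_tsum_rpow, HsE_eq_tsum_rpow]
        gcongr
        exact ENNReal.inner_le_Lp_mul_Lq_tsum Real.HolderConjugate.two_two _ _
    _ = 2 * HsE s u * HsE s v := by rw [HsE_comp_neg, mul_assoc]

noncomputable def resonantTrilinear (a b c : ℤ → ℝ≥0∞) (k : ℤ) : ℝ≥0∞ :=
  if k = 0 then 0 else
    ∑' p : ℤ × ℤ × ℤ,
      if p.1 + p.2.1 + p.2.2 = k ∧ (p.1 + p.2.1) * (p.1 + p.2.2) * (p.2.1 + p.2.2) = 0 ∧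
          p.1 + p.2.1 ≠ 0 ∧ p.2.2 ≠ 0
      then a p.1 * b p.2.1 * c p.2.2 / p.2.2.natAbs else 0

lemma resonantTrilinear_le (a b c : ℤ → ℝ≥0∞) (k : ℤ) :
    resonantTrilinear a b c k ≤ resonantPairing a c * b k + resonantPairing b c * a k := by
  unfold resonantTrilinear
  split_ifs
  · exact zero_le
  refine (ENNReal.tsum_le_tsum_comp_add_tsum_comp (e₁ := fun m : ℤ => (-m, k, m))
    (e₂ := fun m : ℤ => (k, -m, m)) ?_ ?_ ?_).trans (add_le_add ?_ ?_)
  · intro x y h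
    simpa using congrArg (·.2.2) h
  · intro x y h
    simpa using congrArg (·.2.2) h
  · rintro ⟨k₁, k₂, k₃⟩ hp
    obtain ⟨⟨hsum, hres, hne, -⟩, -⟩ := not_forall.mp (mt ite_eq_right_iff.mpr hp)
    simp only [mul_eq_zero, hne, false_or] at hres
    rcases hres with h | h
    · exact .inl ⟨k₃, by simp only at hsum ⊢; ext <;> simp <;> omega⟩
    · exact .inr ⟨k₃, by simp only at hsum ⊢; ext <;> simp <;> omega⟩
  all_goals
    rw [resonantPairing, ← ENNReal.tsum_mul_right]
    refine ENNReal.tsum_le_tsum fun m => ?_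
    split_ifs with hcond hm
    · exact absurd hm hcond.2.2.2
    · exact le_of_eq (by simp only [div_eq_mul_inv]; ring)
    all_goals exact zero_le

lemma HsE_resonantTrilinear_le {s : ℝ} (hs : -(1 / 2 : ℝ) ≤ s) (a b c : ℤ → ℝ≥0∞) :
    HsE s (resonantTrilinear a b c) ≤ 4 * HsE s a * HsE s b * HsE s c :=
  calc HsE s (resonantTrilinear a b c)
      ≤ HsE s ((fun k => resonantPairing a c * b k) + fun k => resonantPairing b c * a k) :=
        HsE_mono (resonantTrilinear_le a b c)
    _ ≤ resonantPairing a c * HsE s b + resonantPairing b c * HsE s a := by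
        grw [HsE_add_le, HsE_const_mul, HsE_const_mul]
    _ ≤ 2 * HsE s a * HsE s c * HsE s b + 2 * HsE s b * HsE s c * HsE s a := by
        gcongr <;> exact resonantPairing_le hs _ _
    _ = 4 * HsE s a * HsE s b * HsE s c := by ring

theorem stmt6 (s : ℝ) (hs : -(1 / 2 : ℝ) < s) :
    ∃ C : ℝ, 0 < C ∧ ∀ a b c : ℤ → NNReal,
      HsE s (fun k =>
        if k = 0 then 0 else
          ∑' p : ℤ × ℤ × ℤ,
            if p.1 + p.2.1 + p.2.2 = k ∧
               (p.1 + p.2.1) * (p.1 + p.2.2) * (p.2.1 + p.2.2) = 0 ∧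
               p.1 + p.2.1 ≠ 0 ∧ p.2.2 ≠ 0
            then (a p.1 : ℝ≥0∞) * (b p.2.1 : ℝ≥0∞) * (c p.2.2 : ℝ≥0∞) /
                (p.2.2.natAbs : ℝ≥0∞)
            else 0)
      ≤ ENNReal.ofReal C * HsE s (fun k => (a k : ℝ≥0∞)) *
          HsE s (fun k => (b k : ℝ≥0∞)) * HsE s (fun k => (c k : ℝ≥0∞)) := by
  refine ⟨4, four_pos, fun a b c => ?_⟩
  rw [ENNReal.ofReal_ofNat]
  exact HsE_resonantTrilinear_le hs.le (fun k => a k) (fun k => b k) (fun k => c k)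
end

section
/- Let s ≥ 0. There exists a constant C = C(s) > 0 such that for all nonnegative sequences a, b, c : ℤ → [0,∞), the sequence F : ℤ → [0,∞] defined by F_0 = 0 and, for k ≠ 0, F_k = Σ a(k1)·b(k2)·c(k3)/(|k3|·|φ̃|), where the sum ranges over all triples (k1,k2,k3) ∈ Γ(k) with k3 ≠ 0 and |k1| = max(|k|, |k1|, |k2|, |k3|), satisfies ‖F‖_{H^s} ≤ C·‖a‖_{H^{s−1}}·‖b‖_{H^s}·‖c‖_{H^s} (the inequality holding in [0,∞]). -/
/-!
For fixed `k`, Cauchy–Schwarz with the weight `W = ⟨k₁⟩^{2(s-1)} ⟨k₂⟩^{2s} ⟨k₃⟩^{2s}` bounds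
`⟨k⟩^{2s} F_k²` by `Σ W (a b c)²` over the triples of the fibre, times `Σ ⟨k⟩^{2s} / (W D²)`,
where `D = |k₃| |φ̃|`. Since `|k| ≤ |k₁|` and `s ≥ 0`, the weight ratio `⟨k⟩^{2s} / W` is at most
`1 + k₁²`, and non-resonance pays for it: `1 + k₁² ≤ 9 (k₁+k₂)² ((k₁+k₃)² + (k₂+k₃)²)`, so the
kernel is at most `k₃⁻² ((k₁+k₃)⁻² + (k₂+k₃)⁻²)`, whose sum over the plane `k₁+k₂+k₃ = k` is
`2 (Σ n⁻²)²`. Summing over `k` counts each triple once and gives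
`‖a‖²_{H^{s-1}} ‖b‖²_{H^s} ‖c‖²_{H^s}`.
-/

open scoped ENNReal

namespace ENNReal

variable {ι : Type*}

theorem tsum_mul_sq_le (f g : ι → ℝ≥0∞) :
    (∑' i, f i * g i) ^ 2 ≤ (∑' i, f i ^ 2) * ∑' i, g i ^ 2 := by
  have holder : ∑' i, f i * g i ≤
      (∑' i, f i ^ (2 : ℝ)) ^ (1 / 2 : ℝ) * (∑' i, g i ^ (2 : ℝ)) ^ (1 / 2 : ℝ) :=
    ENNReal.summable.tsum_le_of_sum_le fun s =>
      (inner_le_Lp_mul_Lq s f g Real.HolderConjugate.two_two).trans <| by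
        gcongr <;> exact ENNReal.sum_le_tsum s
  calc (∑' i, f i * g i) ^ 2
      ≤ ((∑' i, f i ^ (2 : ℝ)) ^ (1 / 2 : ℝ) * (∑' i, g i ^ (2 : ℝ)) ^ (1 / 2 : ℝ)) ^ 2 := by
        gcongr
    _ = (∑' i, f i ^ 2) * ∑' i, g i ^ 2 := by
        simp only [mul_pow, ← rpow_natCast, ← rpow_mul, rpow_two]
        norm_num

theorem mul_tsum_mul_sq_le {c : ℝ≥0∞} {g K W E : ι → ℝ≥0∞}
    (h : ∀ i, c * K i ^ 2 ≤ E i * W i) :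
    c * (∑' i, g i * K i) ^ 2 ≤ (∑' i, W i * g i ^ 2) * ∑' i, E i := by
  have sqrt_sq (x : ℝ≥0∞) : (x ^ (1 / 2 : ℝ)) ^ 2 = x := by
    rw [← rpow_natCast, ← rpow_mul]
    norm_num
  have hsqrt (i : ι) : c ^ (1 / 2 : ℝ) * K i ≤ W i ^ (1 / 2 : ℝ) * E i ^ (1 / 2 : ℝ) := by
    rw [← ENNReal.pow_le_pow_left_iff two_ne_zero, mul_pow, mul_pow, sqrt_sq, sqrt_sq, sqrt_sq,
      mul_comm (W i)]
    exact h i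
  calc c * (∑' i, g i * K i) ^ 2 = (∑' i, g i * (c ^ (1 / 2 : ℝ) * K i)) ^ 2 := by
        rw [← sqrt_sq c, ← mul_pow, ← ENNReal.tsum_mul_left, sqrt_sq]
        congr 2; ext i; ring
    _ ≤ (∑' i, (g i * W i ^ (1 / 2 : ℝ)) * E i ^ (1 / 2 : ℝ)) ^ 2 := by
        refine pow_le_pow_left' (ENNReal.tsum_le_tsum fun i => ?_) 2
        rw [mul_assoc]
        exact mul_le_mul_right (hsqrt i) _
    _ ≤ (∑' i, (g i * W i ^ (1 / 2 : ℝ)) ^ 2) * ∑' i, (E i ^ (1 / 2 : ℝ)) ^ 2 :=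
        tsum_mul_sq_le _ _
    _ = (∑' i, W i * g i ^ 2) * ∑' i, E i := by
        simp only [mul_pow, sqrt_sq, mul_comm (g _ ^ 2)]

theorem tsum_prod_mul_mul {α β γ : Type*} (F : α → ℝ≥0∞) (G : β → ℝ≥0∞) (H : γ → ℝ≥0∞) :
    ∑' p : α × β × γ, F p.1 * G p.2.1 * H p.2.2 = (∑' x, F x) * (∑' y, G y) * ∑' z, H z := by
  simp only [ENNReal.tsum_prod', mul_assoc, ENNReal.tsum_mul_left, ENNReal.tsum_mul_right]

end ENNReal

theorem tsum_mul_sq_tsum_ite_le {κ ι : Type*} {P : κ → ι → Prop} [DecidableEq κ]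
    [∀ k i, Decidable (P k i)] (f : ι → κ) (hP : ∀ k i, P k i → f i = k) {ω : κ → ℝ≥0∞}
    {g K W E : ι → ℝ≥0∞} {M : ℝ≥0∞} (hK : ∀ k i, P k i → ω k * K i ^ 2 ≤ E i * W i)
    (hE : ∀ k, ∑' i, (if f i = k then E i else 0) ≤ M) :
    ∑' k, ω k * (∑' i, if P k i then g i * K i else 0) ^ 2 ≤ M * ∑' i, W i * g i ^ 2 := by
  have fibre (k : κ) : ω k * (∑' i, if P k i then g i * K i else 0) ^ 2 ≤
      (∑' i, if P k i then W i * g i ^ 2 else 0) * M := by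
    calc ω k * (∑' i, if P k i then g i * K i else 0) ^ 2
        = ω k * (∑' i, (if P k i then g i else 0) * (if P k i then K i else 0)) ^ 2 := by
          simp_rw [ite_mul_ite, mul_zero]
      _ ≤ (∑' i, W i * (if P k i then g i else 0) ^ 2) * ∑' i, (if f i = k then E i else 0) :=
          ENNReal.mul_tsum_mul_sq_le fun i => by
            by_cases h : P k i
            · simpa [h, hP k i h] using hK k i h
            · simp [h]
      _ ≤ (∑' i, if P k i then W i * g i ^ 2 else 0) * M := by
          gcongr with i
          · split_ifs <;> simp
          · exact hE k
  calc ∑' k, ω k * (∑' i, if P k i then g i * K i else 0) ^ 2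
      ≤ ∑' k, (∑' i, if P k i then W i * g i ^ 2 else 0) * M := ENNReal.tsum_le_tsum fibre
    _ = M * ∑' i, ∑' k, if P k i then W i * g i ^ 2 else 0 := by
        rw [ENNReal.tsum_mul_right, ENNReal.tsum_comm, mul_comm]
    _ ≤ M * ∑' i, ∑' k, if k = f i then W i * g i ^ 2 else 0 := by
        gcongr with i k
        by_cases h : P k i
        · simp [h, hP k i h]
        · simp [h]
    _ = M * ∑' i, W i * g i ^ 2 := by simp only [tsum_ite_eq]

noncomputable def bracketWeight (t : ℝ) (k : ℤ) : ℝ≥0∞ := ENNReal.ofReal ((1 + (k : ℝ) ^ 2) ^ t)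

/-- `invSq 0 = 0`, which keeps `∑' n, invSq n` finite. -/
noncomputable def invSq (n : ℤ) : ℝ≥0∞ := ENNReal.ofReal (((n : ℝ) ^ 2)⁻¹)

theorem tsum_invSq_ne_top : ∑' n, invSq n ≠ ⊤ := by
  have hsum : Summable fun n : ℤ => ((n : ℝ) ^ 2)⁻¹ := by
    simpa [one_div] using (Real.summable_one_div_int_pow (p := 2)).mpr one_lt_two
  simp only [invSq]
  rw [← ENNReal.ofReal_tsum_of_nonneg (fun n => by positivity) hsum]
  exact ENNReal.ofReal_ne_top

theorem inv_natAbs_sq_eq_invSq {n : ℤ} (hn : n ≠ 0) : ((n.natAbs : ℝ≥0∞))⁻¹ ^ 2 = invSq n := by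
  rw [invSq, ← ENNReal.inv_pow, ENNReal.ofReal_inv_of_pos (by positivity),
    ← ENNReal.ofReal_natCast, ← ENNReal.ofReal_pow (Nat.cast_nonneg _), Nat.cast_natAbs,
    Int.cast_abs, sq_abs]

theorem one_add_sq_rpow_le {s : ℝ} (hs : 0 ≤ s) {x y : ℝ} (hxy : x ^ 2 ≤ y ^ 2) (z t : ℝ) :
    (1 + x ^ 2) ^ s ≤
      (1 + y ^ 2) * ((1 + y ^ 2) ^ (s - 1) * (1 + z ^ 2) ^ s * (1 + t ^ 2) ^ s) := by
  have one_le_rpow (u : ℝ) : 1 ≤ (1 + u ^ 2) ^ s := Real.one_le_rpow (by nlinarith) hs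
  calc (1 + x ^ 2) ^ s ≤ (1 + y ^ 2) ^ s := Real.rpow_le_rpow (by positivity) (by linarith) hs
    _ = (1 + y ^ 2) * (1 + y ^ 2) ^ (s - 1) * 1 * 1 := by
        rw [mul_one, mul_one, mul_comm, ← Real.rpow_add_one (by positivity), sub_add_cancel]
    _ ≤ _ := by
        rw [← mul_assoc, ← mul_assoc]
        gcongr <;> exact one_le_rpow _

theorem one_add_sq_le_of_mul_ne_zero {k1 k2 k3 : ℤ}
    (h : (k1 + k2) * (k1 + k3) * (k2 + k3) ≠ 0) :
    1 + k1 ^ 2 ≤ 9 * (k1 + k2) ^ 2 * ((k1 + k3) ^ 2 + (k2 + k3) ^ 2) := by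
  have one_le_sq {m : ℤ} (hm : m ≠ 0) : 1 ≤ m ^ 2 := by
    nlinarith [Int.one_le_abs hm, sq_abs m]
  obtain ⟨⟨hα, hβ⟩, hγ⟩ := mul_ne_zero_iff.mp h |>.imp_left mul_ne_zero_iff.mp
  have hα := one_le_sq hα
  have hβ := one_le_sq hβ
  have hγ := one_le_sq hγ
  -- `2 k1 = (k1 + k2) + (k1 + k3) - (k2 + k3)`, so `4 k1² ≤ 3 ((k1+k2)² + (k1+k3)² + (k2+k3)²)`
  nlinarith [sq_nonneg (k2 - k3), sq_nonneg (k1 + 2 * k2 + k3), sq_nonneg (k1 + k2 + 2 * k3),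
    mul_le_mul hα hβ zero_le_one (by positivity), mul_le_mul hα hγ zero_le_one (by positivity)]

theorem one_add_sq_rpow_mul_inv_sq_le {s : ℝ} (hs : 0 ≤ s) {k k1 k2 k3 : ℤ}
    (hk : k ^ 2 ≤ k1 ^ 2) (h3 : k3 ≠ 0) (hφ : (k1 + k2) * (k1 + k3) * (k2 + k3) ≠ 0) :
    (1 + (k : ℝ) ^ 2) ^ s * (((k3 * (3 * (k1 + k2) * (k1 + k3) * (k2 + k3)) : ℤ) : ℝ) ^ 2)⁻¹ ≤
      ((k3 : ℝ) ^ 2)⁻¹ * ((((k1 + k3 : ℤ) : ℝ) ^ 2)⁻¹ + (((k2 + k3 : ℤ) : ℝ) ^ 2)⁻¹) *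
        ((1 + (k1 : ℝ) ^ 2) ^ (s - 1) * (1 + (k2 : ℝ) ^ 2) ^ s * (1 + (k3 : ℝ) ^ 2) ^ s) := by
  obtain ⟨⟨hα, hβ⟩, hγ⟩ := mul_ne_zero_iff.mp hφ |>.imp_left mul_ne_zero_iff.mp
  have hα : (k1 : ℝ) + k2 ≠ 0 := by exact_mod_cast hα
  have hβ : (k1 : ℝ) + k3 ≠ 0 := by exact_mod_cast hβ
  have hγ : (k2 : ℝ) + k3 ≠ 0 := by exact_mod_cast hγ
  have h3 : (k3 : ℝ) ≠ 0 := by exact_mod_cast h3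
  have hk1 : 1 + (k1 : ℝ) ^ 2 ≤
      9 * ((k1 : ℝ) + k2) ^ 2 * (((k1 : ℝ) + k3) ^ 2 + ((k2 : ℝ) + k3) ^ 2) := by
    exact_mod_cast one_add_sq_le_of_mul_ne_zero hφ
  have kernel : ((k3 : ℝ) ^ 2)⁻¹ * ((((k1 + k3 : ℤ) : ℝ) ^ 2)⁻¹ + (((k2 + k3 : ℤ) : ℝ) ^ 2)⁻¹) =
      9 * ((k1 : ℝ) + k2) ^ 2 * (((k1 : ℝ) + k3) ^ 2 + ((k2 : ℝ) + k3) ^ 2) *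
        (((k3 * (3 * (k1 + k2) * (k1 + k3) * (k2 + k3)) : ℤ) : ℝ) ^ 2)⁻¹ := by
    push_cast
    field_simp
    ring
  rw [kernel, mul_right_comm _ _ (_ * _)]
  gcongr
  exact (one_add_sq_rpow_le hs (x := k) (y := k1) (by exact_mod_cast hk) _ _).trans (by gcongr)

theorem bracketWeight_mul_inv_sq_le {s : ℝ} (hs : 0 ≤ s) {k k1 k2 k3 : ℤ}
    (hk : k.natAbs ≤ k1.natAbs) (h3 : k3 ≠ 0) (hφ : (k1 + k2) * (k1 + k3) * (k2 + k3) ≠ 0) :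
    bracketWeight s k *
        ((k3.natAbs : ℝ≥0∞) * ((3 * (k1 + k2) * (k1 + k3) * (k2 + k3)).natAbs : ℝ≥0∞))⁻¹ ^ 2 ≤
      invSq k3 * (invSq (k1 + k3) + invSq (k2 + k3)) *
        (bracketWeight (s - 1) k1 * bracketWeight s k2 * bracketWeight s k3) := by
  have hD : k3 * (3 * (k1 + k2) * (k1 + k3) * (k2 + k3)) ≠ 0 :=
    mul_ne_zero h3 (by simpa [mul_assoc] using mul_ne_zero three_ne_zero hφ)
  rw [← Nat.cast_mul, ← Int.natAbs_mul, inv_natAbs_sq_eq_invSq hD]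
  simp only [invSq, bracketWeight]
  rw [← ENNReal.ofReal_mul (by positivity), ← ENNReal.ofReal_add (by positivity) (by positivity),
    ← ENNReal.ofReal_mul (by positivity), ← ENNReal.ofReal_mul (by positivity),
    ← ENNReal.ofReal_mul (by positivity), ← ENNReal.ofReal_mul (by positivity)]
  exact ENNReal.ofReal_le_ofReal <|
    one_add_sq_rpow_mul_inv_sq_le hs (Int.natAbs_le_iff_sq_le.mp hk) h3 hφ

theorem tsum_ite_add_eq_invSq (k : ℤ) :
    ∑' p : ℤ × ℤ × ℤ, (if p.1 + p.2.1 + p.2.2 = k then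
        invSq p.2.2 * (invSq (p.1 + p.2.2) + invSq (p.2.1 + p.2.2)) else 0) =
      2 * (∑' n, invSq n) ^ 2 := by
  have fibre (q : ℤ × ℤ) : ∑' m : ℤ, (if m + q.1 + q.2 = k then
      invSq q.2 * (invSq (m + q.2) + invSq (q.1 + q.2)) else 0) =
        invSq q.2 * invSq (k - q.1) + invSq q.2 * invSq (q.1 + q.2) := by
    rw [tsum_eq_single (k - q.1 - q.2) fun m hm => if_neg (by omega), if_pos (by ring),
      sub_add_cancel, mul_add]
  have shift_sub : ∑' n, invSq (k - n) = ∑' n, invSq n := (Equiv.subLeft k).tsum_eq invSq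
  have shift_add (m : ℤ) : ∑' n, invSq (n + m) = ∑' n, invSq n := (Equiv.addRight m).tsum_eq invSq
  rw [ENNReal.tsum_prod', ENNReal.tsum_comm]
  simp only [fibre, ENNReal.tsum_add, ENNReal.tsum_prod', ENNReal.tsum_mul_left,
    ENNReal.tsum_mul_right, shift_sub]
  rw [ENNReal.tsum_comm]
  simp only [ENNReal.tsum_mul_left, shift_add, ENNReal.tsum_mul_right]
  ring

theorem HsE_mono_s7 {s : ℝ} {F G : ℤ → ℝ≥0∞} (h : ∀ k, F k ≤ G k) : HsE s F ≤ HsE s G := by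
  unfold HsE
  gcongr with k
  exact h k

theorem HsE_le_of_tsum_le {s t u v : ℝ} {F a b c : ℤ → ℝ≥0∞} {M : ℝ≥0∞}
    (h : ∑' k, bracketWeight s k * F k ^ 2 ≤
      M * ∑' p : ℤ × ℤ × ℤ, bracketWeight t p.1 * bracketWeight u p.2.1 * bracketWeight v p.2.2 *
        (a p.1 * b p.2.1 * c p.2.2) ^ 2) :
    HsE s F ≤ M ^ (1 / 2 : ℝ) * HsE t a * HsE u b * HsE v c := by
  have hprod : ∑' p : ℤ × ℤ × ℤ, bracketWeight t p.1 * bracketWeight u p.2.1 *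
      bracketWeight v p.2.2 * (a p.1 * b p.2.1 * c p.2.2) ^ 2 =
      (∑' k, bracketWeight t k * a k ^ 2) * (∑' k, bracketWeight u k * b k ^ 2) *
        ∑' k, bracketWeight v k * c k ^ 2 := by
    rw [← ENNReal.tsum_prod_mul_mul]
    exact tsum_congr fun p => by ring
  refine (ENNReal.rpow_le_rpow (h.trans_eq (by rw [hprod])) (by norm_num)).trans_eq ?_
  simp only [ENNReal.mul_rpow_of_nonneg _ _ (by norm_num : (0 : ℝ) ≤ 1 / 2), HsE, bracketWeight,
    mul_assoc]
theorem stmt7 (s : ℝ) (hs : 0 ≤ s) :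
    ∃ C : ℝ, 0 < C ∧ ∀ a b c : ℤ → NNReal,
      HsE s (fun k =>
        if k = 0 then 0 else
          ∑' p : ℤ × ℤ × ℤ,
            if p.1 + p.2.1 + p.2.2 = k ∧
               (p.1 + p.2.1) * (p.1 + p.2.2) * (p.2.1 + p.2.2) ≠ 0 ∧
               p.2.2 ≠ 0 ∧
               p.1.natAbs = max k.natAbs (max p.1.natAbs (max p.2.1.natAbs p.2.2.natAbs))
            then (a p.1 : ℝ≥0∞) * (b p.2.1 : ℝ≥0∞) * (c p.2.2 : ℝ≥0∞) /
                ((p.2.2.natAbs : ℝ≥0∞) *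
                  ((3 * (p.1 + p.2.1) * (p.1 + p.2.2) * (p.2.1 + p.2.2)).natAbs : ℝ≥0∞))
            else 0)
      ≤ ENNReal.ofReal C * HsE (s - 1) (fun k => (a k : ℝ≥0∞)) *
          HsE s (fun k => (b k : ℝ≥0∞)) * HsE s (fun k => (c k : ℝ≥0∞)) := by
  set M : ℝ≥0∞ := 2 * (∑' n, invSq n) ^ 2
  have hM : M ^ (1 / 2 : ℝ) ≠ ⊤ := ENNReal.rpow_ne_top_of_nonneg (by norm_num)
    (ENNReal.mul_ne_top (by simp) (ENNReal.pow_ne_top tsum_invSq_ne_top))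
  refine ⟨(M ^ (1 / 2 : ℝ)).toReal + 1, by positivity, fun a b c => ?_⟩
  have hMC : M ^ (1 / 2 : ℝ) ≤ ENNReal.ofReal ((M ^ (1 / 2 : ℝ)).toReal + 1) := by
    rw [ENNReal.ofReal_add ENNReal.toReal_nonneg zero_le_one, ENNReal.ofReal_toReal hM]
    exact le_self_add
  have key := tsum_mul_sq_tsum_ite_le (fun p : ℤ × ℤ × ℤ => p.1 + p.2.1 + p.2.2)
    (P := fun k p => p.1 + p.2.1 + p.2.2 = k ∧
      (p.1 + p.2.1) * (p.1 + p.2.2) * (p.2.1 + p.2.2) ≠ 0 ∧ p.2.2 ≠ 0 ∧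
      p.1.natAbs = max k.natAbs (max p.1.natAbs (max p.2.1.natAbs p.2.2.natAbs)))
    (fun _ _ h => h.1) (ω := bracketWeight s) (g := fun p => (a p.1 : ℝ≥0∞) * b p.2.1 * c p.2.2)
    (fun _ _ h => bracketWeight_mul_inv_sq_le hs (h.2.2.2 ▸ le_max_left _ _) h.2.2.1 h.2.1)
    (fun k => (tsum_ite_add_eq_invSq k).le)
  refine (HsE_mono_s7 fun k => ?_).trans ((HsE_le_of_tsum_le key).trans (by gcongr))
  split_ifs
  exacts [zero_le, le_of_eq (by simp only [div_eq_mul_inv])]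
end

section
/- Let 0 ≤ σ ≤ 1 and let σ1, σ2, σ3 ∈ [−1, 0] satisfy σ1 + σ2 + σ3 = σ − 1. There exists a constant C > 0 (depending only on σ, σ1, σ2, σ3) such that for all nonnegative sequences a1, a2, a3 : ℤ → [0,∞): Σ_{k ∈ ℤ, k ≠ 0} |k|^{2σ} Σ_{k1+k2+k3 = k} k_m^{−2}·a1(k1)²·a2(k2)²·a3(k3)² ≤ C·‖a1‖²_{H^{σ1}}·‖a2‖²_{H^{σ2}}·‖a3‖²_{H^{σ3}} (the inequality holding in [0,∞]). -/
open scoped ENNReal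

lemma HsE_sq (s : ℝ) (a : ℤ → ℝ≥0∞) :
    HsE s a ^ 2 = ∑' k : ℤ, ENNReal.ofReal ((1 + (k : ℝ) ^ 2) ^ s) * a k ^ 2 := by
  rw [HsE, ← ENNReal.rpow_natCast _ 2, ← ENNReal.rpow_mul]
  norm_num

lemma helper_aux (s M x : ℝ) (hs : -1 ≤ s) (hs' : s ≤ 0) (hM : 1 ≤ M) (hx : |x| ≤ M) :
    M ^ (2 * s) ≤ 2 * (1 + x ^ 2) ^ s := by
  have hM0 : (0:ℝ) < M := lt_of_lt_of_le one_pos hM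
  have h1 : 1 + x ^ 2 ≤ 2 * M ^ 2 := by nlinarith [abs_nonneg x, sq_abs x]
  have hx0 : (0:ℝ) < 1 + x ^ 2 := by positivity
  have h2 : (2 * M ^ 2) ^ s ≤ (1 + x ^ 2) ^ s :=
    Real.rpow_le_rpow_of_nonpos hx0 h1 hs'
  have h3 : (2 * M ^ 2) ^ s = 2 ^ s * M ^ (2 * s) := by
    rw [Real.mul_rpow (by norm_num) (by positivity), ← Real.rpow_natCast M 2,
      ← Real.rpow_mul hM0.le]
    norm_num [mul_comm]
  have h4 : (2:ℝ) ^ (-1:ℝ) ≤ (2:ℝ) ^ s := Real.rpow_le_rpow_of_exponent_le one_le_two hs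
  have h5 : (2:ℝ) ^ (-1:ℝ) = 1/2 := by
    rw [Real.rpow_neg_one]; norm_num
  have hMp : (0:ℝ) < M ^ (2 * s) := Real.rpow_pos_of_pos hM0 _
  have h7 : 2 ^ s * M ^ (2 * s) ≤ (1 + x ^ 2) ^ s := h3 ▸ h2
  have h6 : (1/2 : ℝ) * M ^ (2 * s) ≤ 2 ^ s * M ^ (2 * s) := by
    rw [← h5]; exact mul_le_mul_of_nonneg_right h4 hMp.le
  linarith

lemma key_real (σ σ1 σ2 σ3 : ℝ) (hσ0 : 0 ≤ σ)
    (h1 : -1 ≤ σ1) (h1' : σ1 ≤ 0) (h2 : -1 ≤ σ2) (h2' : σ2 ≤ 0)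
    (h3 : -1 ≤ σ3) (h3' : σ3 ≤ 0) (hsum : σ1 + σ2 + σ3 = σ - 1)
    (x x1 x2 x3 M : ℝ) (hM : 1 ≤ M) (hx : |x| ≤ M)
    (hx1 : |x1| ≤ M) (hx2 : |x2| ≤ M) (hx3 : |x3| ≤ M) :
    |x| ^ (2 * σ) * (M⁻¹) ^ 2 ≤
      8 * ((1 + x1 ^ 2) ^ σ1 * ((1 + x2 ^ 2) ^ σ2 * (1 + x3 ^ 2) ^ σ3)) := by
  have hM0 : (0:ℝ) < M := lt_of_lt_of_le one_pos hM
  have hA : |x| ^ (2 * σ) ≤ M ^ (2 * σ) :=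
    Real.rpow_le_rpow (abs_nonneg x) hx (by linarith)
  have hinv : (M⁻¹) ^ 2 = M ^ (-2 : ℝ) := by
    rw [← Real.rpow_neg_one, ← Real.rpow_natCast (M ^ (-1:ℝ)) 2, ← Real.rpow_mul hM0.le]
    norm_num
  have hsplit : M ^ (2 * σ) * M ^ (-2 : ℝ)
      = M ^ (2 * σ1) * (M ^ (2 * σ2) * M ^ (2 * σ3)) := by
    rw [← Real.rpow_add hM0, ← Real.rpow_add hM0, ← Real.rpow_add hM0]
    congr 1
    linarith
  have hb1 := helper_aux σ1 M x1 h1 h1' hM hx1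
  have hb2 := helper_aux σ2 M x2 h2 h2' hM hx2
  have hb3 := helper_aux σ3 M x3 h3 h3' hM hx3
  have hp1 : (0:ℝ) < (1 + x1 ^ 2) ^ σ1 := Real.rpow_pos_of_pos (by positivity) _
  have hp2 : (0:ℝ) < (1 + x2 ^ 2) ^ σ2 := Real.rpow_pos_of_pos (by positivity) _
  have hp3 : (0:ℝ) < (1 + x3 ^ 2) ^ σ3 := Real.rpow_pos_of_pos (by positivity) _
  have hq1 : (0:ℝ) < M ^ (2*σ1) := Real.rpow_pos_of_pos hM0 _
  have hq2 : (0:ℝ) < M ^ (2*σ2) := Real.rpow_pos_of_pos hM0 _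
  have hq3 : (0:ℝ) < M ^ (2*σ3) := Real.rpow_pos_of_pos hM0 _
  have hinv2 : (0:ℝ) ≤ (M⁻¹) ^ 2 := by positivity
  calc |x| ^ (2 * σ) * (M⁻¹) ^ 2 ≤ M ^ (2 * σ) * M ^ (-2:ℝ) := by
        rw [← hinv]; exact mul_le_mul_of_nonneg_right hA hinv2
    _ = M ^ (2 * σ1) * (M ^ (2 * σ2) * M ^ (2 * σ3)) := hsplit
    _ ≤ (2 * (1 + x1 ^ 2) ^ σ1) * ((2 * (1 + x2 ^ 2) ^ σ2) * (2 * (1 + x3 ^ 2) ^ σ3)) := by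
        apply mul_le_mul hb1 (mul_le_mul hb2 hb3 hq3.le (by positivity))
          (by positivity) (by positivity)
    _ = 8 * ((1 + x1 ^ 2) ^ σ1 * ((1 + x2 ^ 2) ^ σ2 * (1 + x3 ^ 2) ^ σ3)) := by ring

lemma tsum_triple_mul (f g h : ℤ → ℝ≥0∞) :
    ∑' p : ℤ × ℤ × ℤ, f p.1 * g p.2.1 * h p.2.2
      = (∑' k, f k) * ((∑' k, g k) * (∑' k, h k)) := by
  rw [ENNReal.tsum_prod']
  have inner : ∀ a : ℤ, ∑' q : ℤ × ℤ, f a * g q.1 * h q.2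
      = f a * ((∑' k, g k) * (∑' k, h k)) := by
    intro a
    calc ∑' q : ℤ × ℤ, f a * g q.1 * h q.2
        = ∑' q : ℤ × ℤ, f a * (g q.1 * h q.2) := by simp [mul_assoc]
      _ = f a * ∑' q : ℤ × ℤ, g q.1 * h q.2 := ENNReal.tsum_mul_left
      _ = f a * ((∑' k, g k) * (∑' k, h k)) := by
          rw [ENNReal.tsum_prod']
          congr 1
          calc ∑' b : ℤ, ∑' c : ℤ, g b * h c
              = ∑' b : ℤ, g b * ∑' c : ℤ, h c := by
                refine tsum_congr fun b => ENNReal.tsum_mul_left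
            _ = (∑' k, g k) * (∑' k, h k) := ENNReal.tsum_mul_right
  simp only [inner]
  exact ENNReal.tsum_mul_right

theorem stmt9 (σ σ1 σ2 σ3 : ℝ) (hσ0 : 0 ≤ σ) (hσ1 : σ ≤ 1)
    (h1 : -1 ≤ σ1) (h1' : σ1 ≤ 0) (h2 : -1 ≤ σ2) (h2' : σ2 ≤ 0)
    (h3 : -1 ≤ σ3) (h3' : σ3 ≤ 0) (hsum : σ1 + σ2 + σ3 = σ - 1) :
    ∃ C : ℝ, 0 < C ∧ ∀ a1 a2 a3 : ℤ → NNReal,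
      (∑' k : ℤ,
        if k = 0 then 0 else
          ENNReal.ofReal (|(k : ℝ)| ^ (2 * σ)) *
            ∑' p : ℤ × ℤ × ℤ,
              if p.1 + p.2.1 + p.2.2 = k then
                ((max k.natAbs (max p.1.natAbs (max p.2.1.natAbs p.2.2.natAbs)) : ℝ≥0∞))⁻¹ ^ 2 *
                  (a1 p.1 : ℝ≥0∞) ^ 2 * (a2 p.2.1 : ℝ≥0∞) ^ 2 * (a3 p.2.2 : ℝ≥0∞) ^ 2
              else 0)
      ≤ ENNReal.ofReal C * HsE σ1 (fun k => (a1 k : ℝ≥0∞)) ^ 2 *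
          HsE σ2 (fun k => (a2 k : ℝ≥0∞)) ^ 2 * HsE σ3 (fun k => (a3 k : ℝ≥0∞)) ^ 2 := by
  refine ⟨8, by norm_num, fun a1 a2 a3 => ?_⟩
  set w1 : ℤ → ℝ≥0∞ := fun k => ENNReal.ofReal ((1 + (k : ℝ) ^ 2) ^ σ1) * (a1 k : ℝ≥0∞) ^ 2
  set w2 : ℤ → ℝ≥0∞ := fun k => ENNReal.ofReal ((1 + (k : ℝ) ^ 2) ^ σ2) * (a2 k : ℝ≥0∞) ^ 2
  set w3 : ℤ → ℝ≥0∞ := fun k => ENNReal.ofReal ((1 + (k : ℝ) ^ 2) ^ σ3) * (a3 k : ℝ≥0∞) ^ 2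
  have step1 : (∑' k : ℤ,
        if k = 0 then 0 else
          ENNReal.ofReal (|(k : ℝ)| ^ (2 * σ)) *
            ∑' p : ℤ × ℤ × ℤ,
              if p.1 + p.2.1 + p.2.2 = k then
                ((max k.natAbs (max p.1.natAbs (max p.2.1.natAbs p.2.2.natAbs)) : ℝ≥0∞))⁻¹ ^ 2 *
                  (a1 p.1 : ℝ≥0∞) ^ 2 * (a2 p.2.1 : ℝ≥0∞) ^ 2 * (a3 p.2.2 : ℝ≥0∞) ^ 2
              else 0)
      ≤ ∑' k : ℤ, ∑' p : ℤ × ℤ × ℤ,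
          if p.1 + p.2.1 + p.2.2 = k then
            ENNReal.ofReal 8 * (w1 p.1 * (w2 p.2.1 * w3 p.2.2)) else 0 := by
    refine ENNReal.tsum_le_tsum fun k => ?_
    by_cases hk : k = 0
    · simp [hk]
    · simp only [hk, if_false]
      rw [← ENNReal.tsum_mul_left]
      refine ENNReal.tsum_le_tsum fun p => ?_
      by_cases hp : p.1 + p.2.1 + p.2.2 = k
      · simp only [hp, if_true]
        have cast_max : ∀ a b : ℕ, ((a:ℝ≥0∞)) ⊔ (b:ℝ≥0∞) = ((max a b : ℕ) : ℝ≥0∞) :=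
          fun a b => (Monotone.map_max (fun x y h => by exact_mod_cast h)).symm
        rw [cast_max, cast_max, cast_max]
        set N : ℕ := max k.natAbs (max p.1.natAbs (max p.2.1.natAbs p.2.2.natAbs)) with hN
        have hN1 : 1 ≤ N :=
          le_trans (Nat.one_le_iff_ne_zero.mpr (Int.natAbs_ne_zero.mpr hk)) (Nat.le_max_left _ _)
        have hNpos : (0:ℝ) < (N:ℝ) := by exact_mod_cast hN1
        have hbound : ENNReal.ofReal (|(k : ℝ)| ^ (2 * σ)) * ((N : ℝ≥0∞))⁻¹ ^ 2
            ≤ ENNReal.ofReal 8 *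
              (ENNReal.ofReal ((1 + (p.1 : ℝ) ^ 2) ^ σ1) *
                (ENNReal.ofReal ((1 + (p.2.1 : ℝ) ^ 2) ^ σ2) *
                  ENNReal.ofReal ((1 + (p.2.2 : ℝ) ^ 2) ^ σ3))) := by
          have hNe : ((N : ℝ≥0∞))⁻¹ = ENNReal.ofReal ((N:ℝ)⁻¹) := by
            rw [ENNReal.ofReal_inv_of_pos hNpos, ENNReal.ofReal_natCast]
          rw [hNe, ← ENNReal.ofReal_pow (by positivity), ← ENNReal.ofReal_mul (by positivity),
            ← ENNReal.ofReal_mul (by positivity), ← ENNReal.ofReal_mul (by positivity),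
            ← ENNReal.ofReal_mul (by norm_num)]
          apply ENNReal.ofReal_le_ofReal
          have habs : ∀ m : ℤ, |(m : ℝ)| = (m.natAbs : ℝ) := fun m => by
            rw [Nat.cast_natAbs]; push_cast; ring_nf
          have hMk : |(k:ℝ)| ≤ (N:ℝ) := by
            rw [habs]; exact_mod_cast Nat.le_max_left _ _
          have hM1 : |(p.1:ℝ)| ≤ (N:ℝ) := by
            rw [habs]; exact_mod_cast (Nat.le_max_left _ _).trans (Nat.le_max_right _ _)
          have hM2 : |(p.2.1:ℝ)| ≤ (N:ℝ) := by
            rw [habs]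
            exact_mod_cast ((Nat.le_max_left _ _).trans (Nat.le_max_right _ _)).trans
              (Nat.le_max_right _ _)
          have hM3 : |(p.2.2:ℝ)| ≤ (N:ℝ) := by
            rw [habs]
            exact_mod_cast ((Nat.le_max_right _ _).trans (Nat.le_max_right _ _)).trans
              (Nat.le_max_right _ _)
          exact key_real σ σ1 σ2 σ3 hσ0 h1 h1' h2 h2' h3 h3' hsum _ _ _ _ _
            (by exact_mod_cast hN1) hMk hM1 hM2 hM3
        calc ENNReal.ofReal (|(k : ℝ)| ^ (2 * σ)) *
              (((N : ℝ≥0∞))⁻¹ ^ 2 * (a1 p.1 : ℝ≥0∞) ^ 2 * (a2 p.2.1 : ℝ≥0∞) ^ 2 *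
                (a3 p.2.2 : ℝ≥0∞) ^ 2)
            = (ENNReal.ofReal (|(k : ℝ)| ^ (2 * σ)) * ((N : ℝ≥0∞))⁻¹ ^ 2) *
              ((a1 p.1 : ℝ≥0∞) ^ 2 * ((a2 p.2.1 : ℝ≥0∞) ^ 2 * (a3 p.2.2 : ℝ≥0∞) ^ 2)) := by
              ring
          _ ≤ (ENNReal.ofReal 8 *
              (ENNReal.ofReal ((1 + (p.1 : ℝ) ^ 2) ^ σ1) *
                (ENNReal.ofReal ((1 + (p.2.1 : ℝ) ^ 2) ^ σ2) *
                  ENNReal.ofReal ((1 + (p.2.2 : ℝ) ^ 2) ^ σ3)))) *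
              ((a1 p.1 : ℝ≥0∞) ^ 2 * ((a2 p.2.1 : ℝ≥0∞) ^ 2 * (a3 p.2.2 : ℝ≥0∞) ^ 2)) :=
              mul_le_mul_left hbound _
          _ = ENNReal.ofReal 8 * (w1 p.1 * (w2 p.2.1 * w3 p.2.2)) := by
              simp only [w1, w2, w3]; ring
      · simp [hp]
  have step2 : (∑' k : ℤ, ∑' p : ℤ × ℤ × ℤ,
        if p.1 + p.2.1 + p.2.2 = k then
          ENNReal.ofReal 8 * (w1 p.1 * (w2 p.2.1 * w3 p.2.2)) else 0)
      = ENNReal.ofReal 8 * ((∑' k, w1 k) * ((∑' k, w2 k) * (∑' k, w3 k))) := by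
    rw [ENNReal.tsum_comm]
    have : ∀ p : ℤ × ℤ × ℤ, (∑' k : ℤ,
        if p.1 + p.2.1 + p.2.2 = k then
          ENNReal.ofReal 8 * (w1 p.1 * (w2 p.2.1 * w3 p.2.2)) else 0)
        = ENNReal.ofReal 8 * (w1 p.1 * (w2 p.2.1 * w3 p.2.2)) := by
      intro p
      simp only [eq_comm (a := p.1 + p.2.1 + p.2.2)]
      exact tsum_ite_eq _ _
    simp only [this]
    rw [ENNReal.tsum_mul_left]
    congr 1
    have := tsum_triple_mul w1 w2 w3
    simpa [mul_assoc] using this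
  refine step1.trans ?_
  rw [step2, HsE_sq, HsE_sq, HsE_sq]
  simp only [w1, w2, w3]
  ring_nf
  exact le_refl _
end

section
/- Let s ≥ 0. There exists a constant C = C(s) > 0 such that for all ε ∈ (0,1], all t ≥ 0, all real N ≥ 1, and all finitely supported sequences a, b : ℤ → ℂ, the sequence G defined by G_k = Σ_{k1+k2=k, k1≠0, k2≠0} k·exp(−i·t·Q1(k,k1,k2))/Q1(k,k1,k2)·a(k1)·b(k2), where Q1(k,k1,k2) = 3k·k1·k2 + iε(k² − k1² − k2²), satisfies (Σ_{|k|>N} (1+k²)^s e^{−2tεk²} |G_k|²)^{1/2} ≤ C·N^{−1}·‖(e^{−tεk²}a_k)_{k∈ℤ}‖_{H^s}·‖(e^{−tεk²}b_k)_{k∈ℤ}‖_{H^s}. -/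
open scoped ENNReal

/-- `Q1(k, k1, k2) = 3 k k1 k2 + i ε (k² - k1² - k2²)`. -/
noncomputable def Q1 (ε : ℝ) (k k1 k2 : ℤ) : ℂ :=
  3 * (k : ℂ) * (k1 : ℂ) * (k2 : ℂ) +
    Complex.I * (ε : ℂ) * ((k : ℂ) ^ 2 - (k1 : ℂ) ^ 2 - (k2 : ℂ) ^ 2)

/-!
Since `Re Q1(k, k1, k2) = 3 k k1 k2`, the multiplier obeys `|k / Q1| ≤ 1 / (3 |k1| |k2|)`, and
`|exp(-i t Q1)| = exp(t ε (k² - k1² - k2²))` moves the damping `e^{-tεk²}` of the output exactly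
onto the two inputs. Together with `1 + k² ≤ 2 (1 + k1²) (1 + k2²)` and, for `|k| > N`,
`1 / (|k1| |k2|) = (1/|k1| + 1/|k2|) / (|k1| + |k2|) ≤ N⁻¹ (1/|k1| + 1/|k2|)`, this bounds the
weighted `G` pointwise by `N⁻¹` times `(u/|·|) ⋆ v + u ⋆ (v/|·|)`, where `u`, `v` are the weighted
inputs. Young's inequality `ℓ¹ ⋆ ℓ² ⊆ ℓ²` and Cauchy–Schwarz `‖u/|·|‖_{ℓ¹} ≤ ‖1/|·|‖_{ℓ²} ‖u‖_{ℓ²}`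
conclude. Everything is estimated in `ℝ≥0∞`, so no summability ever has to be checked.
-/

open MeasureTheory

section SequenceNorms

variable {ι : Type*}

noncomputable def l2Norm (f : ι → ℝ≥0∞) : ℝ≥0∞ :=
  (∑' i, f i ^ 2) ^ (1 / 2 : ℝ)

lemma ENNReal.rpow_half_sq (x : ℝ≥0∞) : (x ^ (1 / 2 : ℝ)) ^ 2 = x := by
  rw [← ENNReal.rpow_natCast, ← ENNReal.rpow_mul]; norm_num

lemma ENNReal.sq_rpow_half (x : ℝ≥0∞) : (x ^ 2) ^ (1 / 2 : ℝ) = x := by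
  rw [← ENNReal.rpow_natCast, ← ENNReal.rpow_mul]; norm_num

theorem l2Norm_sq (f : ι → ℝ≥0∞) : l2Norm f ^ 2 = ∑' i, f i ^ 2 := ENNReal.rpow_half_sq _

theorem l2Norm_const_mul (c : ℝ≥0∞) (f : ι → ℝ≥0∞) :
    l2Norm (fun i => c * f i) = c * l2Norm f := by
  simp only [l2Norm, mul_pow, ENNReal.tsum_mul_left]
  rw [ENNReal.mul_rpow_of_nonneg _ _ (by norm_num), ENNReal.sq_rpow_half]

theorem tsum_mul_le_l2Norm_mul_l2Norm (f g : ι → ℝ≥0∞) :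
    ∑' i, f i * g i ≤ l2Norm f * l2Norm g := by
  let _ : MeasurableSpace ι := ⊤
  have h := ENNReal.lintegral_mul_le_Lp_mul_Lq (Measure.count : Measure ι) .two_two
    (Measurable.of_discrete (f := f)).aemeasurable (Measurable.of_discrete (f := g)).aemeasurable
  simp only [lintegral_count, Pi.mul_apply] at h
  simpa only [l2Norm, ← ENNReal.rpow_two] using h

theorem l2Norm_add_le (f g : ι → ℝ≥0∞) : l2Norm (f + g) ≤ l2Norm f + l2Norm g := by
  let _ : MeasurableSpace ι := ⊤
  have h := ENNReal.lintegral_Lp_add_le (μ := (Measure.count : Measure ι))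
    (Measurable.of_discrete (f := f)).aemeasurable (Measurable.of_discrete (f := g)).aemeasurable
    one_le_two
  simp only [lintegral_count] at h
  simpa only [l2Norm, ← ENNReal.rpow_two] using h

end SequenceNorms

section Convolution

variable {G : Type*} [AddCommGroup G]

noncomputable def discreteConv (u v : G → ℝ≥0∞) (k : G) : ℝ≥0∞ :=
  ∑' j, u j * v (k - j)

theorem discreteConv_comm (u v : G → ℝ≥0∞) : discreteConv u v = discreteConv v u := by
  ext k
  rw [discreteConv, ← (Equiv.subLeft k).tsum_eq]
  simp [discreteConv, mul_comm]

theorem l2Norm_discreteConv_le (u v : G → ℝ≥0∞) :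
    l2Norm (discreteConv u v) ≤ (∑' j, u j) * l2Norm v := by
  -- Cauchy–Schwarz against the weights `u j`: `(∑ u_j v_{k-j})² ≤ (∑ u_j) ∑ u_j v_{k-j}²`.
  have pointwise (k : G) : discreteConv u v k ^ 2 ≤ (∑' j, u j) * ∑' j, u j * v (k - j) ^ 2 := by
    have split (j : G) : u j * v (k - j) = u j ^ (1 / 2 : ℝ) * (u j ^ (1 / 2 : ℝ) * v (k - j)) := by
      rw [← mul_assoc, ← pow_two, ENNReal.rpow_half_sq]
    calc discreteConv u v k ^ 2
        = (∑' j, u j ^ (1 / 2 : ℝ) * (u j ^ (1 / 2 : ℝ) * v (k - j))) ^ 2 := by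
          simp only [discreteConv, ← split]
      _ ≤ (l2Norm (fun j => u j ^ (1 / 2 : ℝ)) *
            l2Norm (fun j => u j ^ (1 / 2 : ℝ) * v (k - j))) ^ 2 := by
          gcongr; exact tsum_mul_le_l2Norm_mul_l2Norm _ _
      _ = (∑' j, u j) * ∑' j, u j * v (k - j) ^ 2 := by
          simp only [mul_pow, l2Norm_sq, ENNReal.rpow_half_sq]
  have total : ∑' k, ∑' j, u j * v (k - j) ^ 2 = (∑' j, u j) * ∑' k, v k ^ 2 := by
    rw [ENNReal.tsum_comm, ← ENNReal.tsum_mul_right]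
    refine tsum_congr fun j => ?_
    rw [ENNReal.tsum_mul_left]
    exact congrArg _ ((Equiv.subRight j).tsum_eq fun k => v k ^ 2)
  calc l2Norm (discreteConv u v)
      ≤ (∑' k, (∑' j, u j) * ∑' j, u j * v (k - j) ^ 2) ^ (1 / 2 : ℝ) := by
        unfold l2Norm; gcongr with k; exact pointwise k
    _ = ((∑' j, u j) ^ 2 * ∑' k, v k ^ 2) ^ (1 / 2 : ℝ) := by
        rw [ENNReal.tsum_mul_left, total, ← mul_assoc, ← pow_two]
    _ = (∑' j, u j) * l2Norm v := by
        rw [ENNReal.mul_rpow_of_nonneg _ _ (by norm_num), ENNReal.sq_rpow_half, l2Norm]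

theorem l2Norm_discreteConv_add_le (r u v : G → ℝ≥0∞) :
    l2Norm (discreteConv (r * u) v + discreteConv u (r * v))
      ≤ 2 * l2Norm r * l2Norm u * l2Norm v := by
  calc _ ≤ l2Norm (discreteConv (r * u) v) + l2Norm (discreteConv (r * v) u) := by
        rw [discreteConv_comm u]; exact l2Norm_add_le _ _
    _ ≤ (∑' j, r j * u j) * l2Norm v + (∑' j, r j * v j) * l2Norm u := by
        gcongr <;> exact l2Norm_discreteConv_le _ _
    _ ≤ l2Norm r * l2Norm u * l2Norm v + l2Norm r * l2Norm v * l2Norm u := by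
        gcongr <;> exact tsum_mul_le_l2Norm_mul_l2Norm _ _
    _ = 2 * l2Norm r * l2Norm u * l2Norm v := by ring

end Convolution

theorem three_mul_abs_le_norm_Q1 (ε : ℝ) (k k1 k2 : ℤ) :
    3 * |(k : ℝ)| * |(k1 : ℝ)| * |(k2 : ℝ)| ≤ ‖Q1 ε k k1 k2‖ := by
  have hre : (Q1 ε k k1 k2).re = 3 * k * k1 * k2 := by simp [Q1, pow_two]
  calc 3 * |(k : ℝ)| * |(k1 : ℝ)| * |(k2 : ℝ)| = |(Q1 ε k k1 k2).re| := by
        simp [hre, abs_mul]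
    _ ≤ ‖Q1 ε k k1 k2‖ := Complex.abs_re_le_norm _

theorem norm_cexp_neg_I_mul_Q1 (ε t : ℝ) (k k1 k2 : ℤ) :
    ‖Complex.exp (-(Complex.I * t * Q1 ε k k1 k2))‖
      = Real.exp (t * ε * ((k : ℝ) ^ 2 - (k1 : ℝ) ^ 2 - (k2 : ℝ) ^ 2)) := by
  rw [Complex.norm_exp]
  congr 1
  simp [Q1, pow_two, mul_comm, mul_left_comm, mul_assoc]

theorem norm_symbol_le (ε t : ℝ) (k : ℤ) {k1 k2 : ℤ} (hk1 : k1 ≠ 0) (hk2 : k2 ≠ 0) :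
    ‖(k : ℂ) * Complex.exp (-(Complex.I * t * Q1 ε k k1 k2)) / Q1 ε k k1 k2‖
      ≤ Real.exp (t * ε * ((k : ℝ) ^ 2 - (k1 : ℝ) ^ 2 - (k2 : ℝ) ^ 2))
          / (3 * |(k1 : ℝ)| * |(k2 : ℝ)|) := by
  rcases eq_or_ne k 0 with rfl | hk
  · simp only [Int.cast_zero, zero_mul, zero_div, norm_zero]; positivity
  rw [norm_div, norm_mul, norm_cexp_neg_I_mul_Q1, Complex.norm_intCast]
  calc |(k : ℝ)| * Real.exp (t * ε * ((k : ℝ) ^ 2 - (k1 : ℝ) ^ 2 - (k2 : ℝ) ^ 2)) / ‖Q1 ε k k1 k2‖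
      ≤ |(k : ℝ)| * Real.exp (t * ε * ((k : ℝ) ^ 2 - (k1 : ℝ) ^ 2 - (k2 : ℝ) ^ 2))
          / (3 * |(k : ℝ)| * |(k1 : ℝ)| * |(k2 : ℝ)|) := by
        gcongr; exact three_mul_abs_le_norm_Q1 ε k k1 k2
    _ = _ := by field_simp

theorem one_add_sq_add_rpow_le {r : ℝ} (hr : 0 ≤ r) (x y : ℝ) :
    (1 + (x + y) ^ 2) ^ r ≤ 2 ^ r * ((1 + x ^ 2) ^ r * (1 + y ^ 2) ^ r) := by
  rw [← Real.mul_rpow (by positivity) (by positivity),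
    ← Real.mul_rpow (by positivity) (by positivity)]
  gcongr
  nlinarith [sq_nonneg (x - y), sq_nonneg (x * y)]

theorem inv_mul_le_inv_mul_inv_add_inv {x y N : ℝ} (hx : 0 < x) (hy : 0 < y) (hN : 0 < N)
    (h : N ≤ x + y) : (x * y)⁻¹ ≤ N⁻¹ * (x⁻¹ + y⁻¹) := by
  have : (x * y)⁻¹ = (x + y)⁻¹ * (x⁻¹ + y⁻¹) := by field_simp; ring
  rw [this]
  gcongr

noncomputable def weightedAmp (s t ε : ℝ) (c : ℤ → ℂ) (k : ℤ) : ℝ :=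
  (1 + (k : ℝ) ^ 2) ^ (s / 2) * (Real.exp (-(t * ε * (k : ℝ) ^ 2)) * ‖c k‖)

theorem weightedAmp_nonneg (s t ε : ℝ) (c : ℤ → ℂ) (k : ℤ) : 0 ≤ weightedAmp s t ε c k := by
  unfold weightedAmp; positivity

theorem weighted_term_le {s : ℝ} (hs : 0 ≤ s) (ε t : ℝ) {N : ℝ} (hN : 0 < N) (a b : ℤ → ℂ)
    {k k1 k2 : ℤ} (hk : k1 + k2 = k) (hk1 : k1 ≠ 0) (hk2 : k2 ≠ 0) (hNk : N < |(k : ℝ)|) :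
    (1 + (k : ℝ) ^ 2) ^ (s / 2) * Real.exp (-(t * ε * (k : ℝ) ^ 2)) *
        ‖(k : ℂ) * Complex.exp (-(Complex.I * t * Q1 ε k k1 k2)) / Q1 ε k k1 k2 * a k1 * b k2‖
      ≤ 2 ^ (s / 2) / 3 * N⁻¹ *
          (|(k1 : ℝ)|⁻¹ * weightedAmp s t ε a k1 * weightedAmp s t ε b k2
            + weightedAmp s t ε a k1 * (|(k2 : ℝ)|⁻¹ * weightedAmp s t ε b k2)) := by
  have hk' : (k : ℝ) = k1 + k2 := by rw [← hk]; push_cast; ring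
  have h1 : (0 : ℝ) < |(k1 : ℝ)| := by positivity
  have h2 : (0 : ℝ) < |(k2 : ℝ)| := by positivity
  have weight := one_add_sq_add_rpow_le (by positivity : 0 ≤ s / 2) (k1 : ℝ) k2
  rw [← hk'] at weight
  have symbol : Real.exp (-(t * ε * (k : ℝ) ^ 2)) *
        ‖(k : ℂ) * Complex.exp (-(Complex.I * t * Q1 ε k k1 k2)) / Q1 ε k k1 k2‖
      ≤ Real.exp (-(t * ε * (k1 : ℝ) ^ 2)) * Real.exp (-(t * ε * (k2 : ℝ) ^ 2)) / 3
          * (|(k1 : ℝ)| * |(k2 : ℝ)|)⁻¹ := by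
    calc _ ≤ Real.exp (-(t * ε * (k : ℝ) ^ 2)) *
            (Real.exp (t * ε * ((k : ℝ) ^ 2 - (k1 : ℝ) ^ 2 - (k2 : ℝ) ^ 2))
              / (3 * |(k1 : ℝ)| * |(k2 : ℝ)|)) := by
          gcongr; exact norm_symbol_le ε t k hk1 hk2
      _ = _ := by
          rw [← mul_div_assoc, ← Real.exp_add, ← Real.exp_add]
          field_simp
          ring_nf
  have frequencies : (|(k1 : ℝ)| * |(k2 : ℝ)|)⁻¹ ≤ N⁻¹ * (|(k1 : ℝ)|⁻¹ + |(k2 : ℝ)|⁻¹) :=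
    inv_mul_le_inv_mul_inv_add_inv h1 h2 hN (hNk.le.trans (hk' ▸ abs_add_le _ _))
  calc _ = (1 + (k : ℝ) ^ 2) ^ (s / 2) * (Real.exp (-(t * ε * (k : ℝ) ^ 2)) *
          ‖(k : ℂ) * Complex.exp (-(Complex.I * t * Q1 ε k k1 k2)) / Q1 ε k k1 k2‖)
          * (‖a k1‖ * ‖b k2‖) := by
        rw [norm_mul, norm_mul]; ring
    _ ≤ (2 ^ (s / 2) * ((1 + (k1 : ℝ) ^ 2) ^ (s / 2) * (1 + (k2 : ℝ) ^ 2) ^ (s / 2))) *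
          (Real.exp (-(t * ε * (k1 : ℝ) ^ 2)) * Real.exp (-(t * ε * (k2 : ℝ) ^ 2)) / 3
            * (N⁻¹ * (|(k1 : ℝ)|⁻¹ + |(k2 : ℝ)|⁻¹))) * (‖a k1‖ * ‖b k2‖) := by
        gcongr ?_ * ?_ * _
        exact symbol.trans (by gcongr)
    _ = _ := by unfold weightedAmp; ring

theorem HsE_eq_l2Norm_weightedAmp (s t ε : ℝ) (c : ℤ → ℂ) :
    HsE s (fun k => ENNReal.ofReal (Real.exp (-(t * ε * (k : ℝ) ^ 2)) * ‖c k‖))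
      = l2Norm (ENNReal.ofReal ∘ weightedAmp s t ε c) := by
  unfold HsE l2Norm weightedAmp
  congr 1
  refine tsum_congr fun k => ?_
  have weight : ((1 + (k : ℝ) ^ 2) ^ (s / 2)) ^ 2 = (1 + (k : ℝ) ^ 2) ^ s := by
    rw [← Real.rpow_mul_natCast (by positivity)]; norm_num
  rw [Function.comp_apply, ENNReal.ofReal_mul (p := (1 + (k : ℝ) ^ 2) ^ (s / 2)) (by positivity),
    mul_pow, ← ENNReal.ofReal_pow (p := (1 + (k : ℝ) ^ 2) ^ (s / 2)) (by positivity), weight]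

-- `|0|⁻¹ = 0` is harmless: the frequency `0` never enters the bilinear form.
noncomputable def invAbs (k : ℤ) : ℝ≥0∞ := ENNReal.ofReal |(k : ℝ)|⁻¹

theorem l2Norm_invAbs_ne_top : l2Norm invAbs ≠ ∞ := by
  have summable : Summable (fun k : ℤ => |(k : ℝ)|⁻¹ ^ 2) :=
    (Real.summable_one_div_int_pow.mpr one_lt_two).congr fun k => by
      rw [one_div, ← sq_abs, inv_pow]
  refine ENNReal.rpow_ne_top_of_nonneg (by norm_num) ?_
  simp_rw [invAbs, ← ENNReal.ofReal_pow (inv_nonneg.mpr (abs_nonneg _))]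
  rw [← ENNReal.ofReal_tsum_of_nonneg (fun _ => by positivity) summable]
  exact ENNReal.ofReal_ne_top

noncomputable def bilinearTerm (ε t : ℝ) (a b : ℤ → ℂ) (k k1 : ℤ) : ℂ :=
  if k1 ≠ 0 ∧ k - k1 ≠ 0 then
    (k : ℂ) * Complex.exp (-(Complex.I * (t : ℂ) * Q1 ε k k1 (k - k1))) /
      Q1 ε k k1 (k - k1) * a k1 * b (k - k1)
  else 0

noncomputable def bilinearG (ε t : ℝ) (a b : ℤ → ℂ) (k : ℤ) : ℂ :=
  ∑' k1 : ℤ, bilinearTerm ε t a b k k1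

section Weighted

variable {s : ℝ} (ε t : ℝ) {N : ℝ} (a b : ℤ → ℂ)

theorem enorm_bilinearTerm_le (hs : 0 ≤ s) (hN : 0 < N) {k : ℤ} (hNk : N < |(k : ℝ)|) (k1 : ℤ) :
    ENNReal.ofReal ((1 + (k : ℝ) ^ 2) ^ (s / 2) * Real.exp (-(t * ε * (k : ℝ) ^ 2))) *
        ‖bilinearTerm ε t a b k k1‖ₑ
      ≤ ENNReal.ofReal (2 ^ (s / 2) / 3) * ENNReal.ofReal N⁻¹ *
          ((invAbs * (ENNReal.ofReal ∘ weightedAmp s t ε a)) k1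
              * (ENNReal.ofReal ∘ weightedAmp s t ε b) (k - k1)
            + (ENNReal.ofReal ∘ weightedAmp s t ε a) k1
              * (invAbs * (ENNReal.ofReal ∘ weightedAmp s t ε b)) (k - k1)) := by
  unfold bilinearTerm
  split_ifs with h
  · have hwa := weightedAmp_nonneg s t ε a k1
    have hwb := weightedAmp_nonneg s t ε b (k - k1)
    rw [← ofReal_norm, ← ENNReal.ofReal_mul (by positivity)]
    refine (ENNReal.ofReal_le_ofReal
      (weighted_term_le hs ε t hN a b (add_sub_cancel k1 k) h.1 h.2 hNk)).trans_eq ?_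
    simp only [Pi.mul_apply, Function.comp_apply, invAbs]
    rw [ENNReal.ofReal_mul (by positivity), ENNReal.ofReal_add (by positivity) (by positivity),
      ENNReal.ofReal_mul (by positivity), ENNReal.ofReal_mul (by positivity),
      ENNReal.ofReal_mul hwa, ENNReal.ofReal_mul (by positivity),
      ENNReal.ofReal_mul (by positivity)]
  · simp

theorem enorm_bilinearG_le (hs : 0 ≤ s) (hN : 0 < N) {k : ℤ} (hNk : N < |(k : ℝ)|) :
    ENNReal.ofReal ((1 + (k : ℝ) ^ 2) ^ (s / 2) * Real.exp (-(t * ε * (k : ℝ) ^ 2))) *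
        ‖bilinearG ε t a b k‖ₑ
      ≤ ENNReal.ofReal (2 ^ (s / 2) / 3) * ENNReal.ofReal N⁻¹ *
          (discreteConv (invAbs * (ENNReal.ofReal ∘ weightedAmp s t ε a))
              (ENNReal.ofReal ∘ weightedAmp s t ε b)
            + discreteConv (ENNReal.ofReal ∘ weightedAmp s t ε a)
              (invAbs * (ENNReal.ofReal ∘ weightedAmp s t ε b))) k := by
  calc _ ≤ ENNReal.ofReal ((1 + (k : ℝ) ^ 2) ^ (s / 2) * Real.exp (-(t * ε * (k : ℝ) ^ 2))) *
          ∑' k1, ‖bilinearTerm ε t a b k k1‖ₑ := by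
        gcongr; exact enorm_tsum_le_tsum_enorm
    _ = ∑' k1, ENNReal.ofReal ((1 + (k : ℝ) ^ 2) ^ (s / 2) * Real.exp (-(t * ε * (k : ℝ) ^ 2))) *
          ‖bilinearTerm ε t a b k k1‖ₑ := ENNReal.tsum_mul_left.symm
    _ ≤ _ := ENNReal.tsum_le_tsum fun k1 => enorm_bilinearTerm_le ε t a b hs hN hNk k1
    _ = _ := by rw [ENNReal.tsum_mul_left, ENNReal.tsum_add]; rfl

theorem weighted_sq_enorm_bilinearG_le (hs : 0 ≤ s) (hN : 0 < N) (k : ℤ) :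
    (if N < |(k : ℝ)| then
        ENNReal.ofReal ((1 + (k : ℝ) ^ 2) ^ s) *
          ENNReal.ofReal (Real.exp (-(2 * t * ε * (k : ℝ) ^ 2))) *
          ENNReal.ofReal ‖bilinearG ε t a b k‖ ^ 2
      else 0)
      ≤ (ENNReal.ofReal (2 ^ (s / 2) / 3) * ENNReal.ofReal N⁻¹ *
          (discreteConv (invAbs * (ENNReal.ofReal ∘ weightedAmp s t ε a))
              (ENNReal.ofReal ∘ weightedAmp s t ε b)
            + discreteConv (ENNReal.ofReal ∘ weightedAmp s t ε a)
              (invAbs * (ENNReal.ofReal ∘ weightedAmp s t ε b))) k) ^ 2 := by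
  split_ifs with hNk
  · have weight : ((1 + (k : ℝ) ^ 2) ^ (s / 2) * Real.exp (-(t * ε * (k : ℝ) ^ 2))) ^ 2
        = (1 + (k : ℝ) ^ 2) ^ s * Real.exp (-(2 * t * ε * (k : ℝ) ^ 2)) := by
      have two_mul_exponent : ((2 : ℕ) : ℝ) * -(t * ε * (k : ℝ) ^ 2) = -(2 * t * ε * (k : ℝ) ^ 2) := by
        push_cast; ring
      rw [mul_pow, ← Real.rpow_mul_natCast (by positivity), ← Real.exp_nat_mul, two_mul_exponent]
      norm_num
    rw [← ENNReal.ofReal_mul (by positivity), ← weight, ENNReal.ofReal_pow (by positivity),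
      ofReal_norm, ← mul_pow]
    exact pow_le_pow_left' (enorm_bilinearG_le ε t a b hs hN hNk) 2
  · exact zero_le

end Weighted

theorem stmt10 (s : ℝ) (hs : 0 ≤ s) :
    ∃ C : ℝ, 0 < C ∧
      ∀ ε : ℝ, ε ∈ Set.Ioc (0 : ℝ) 1 → ∀ t : ℝ, 0 ≤ t → ∀ N : ℝ, 1 ≤ N →
        ∀ a b : ℤ → ℂ, (Function.support a).Finite → (Function.support b).Finite →
          (∑' k : ℤ,
            if N < |(k : ℝ)| then
              ENNReal.ofReal ((1 + (k : ℝ) ^ 2) ^ s) *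
                ENNReal.ofReal (Real.exp (-(2 * t * ε * (k : ℝ) ^ 2))) *
                ENNReal.ofReal (norm
                  (∑' k1 : ℤ,
                    if k1 ≠ 0 ∧ k - k1 ≠ 0 then
                      (k : ℂ) * Complex.exp (-(Complex.I * (t : ℂ) * Q1 ε k k1 (k - k1))) /
                          Q1 ε k k1 (k - k1) * a k1 * b (k - k1)
                    else 0)) ^ 2
            else 0) ^ (1 / 2 : ℝ)
          ≤ ENNReal.ofReal C * ENNReal.ofReal N⁻¹ *
              HsE s (fun k =>
                ENNReal.ofReal (Real.exp (-(t * ε * (k : ℝ) ^ 2)) * norm (a k))) *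
              HsE s (fun k =>
                ENNReal.ofReal (Real.exp (-(t * ε * (k : ℝ) ^ 2)) * norm (b k))) := by
  set K := ENNReal.ofReal (2 ^ (s / 2) / 3) * (2 * l2Norm invAbs)
  have hK : K ≠ ∞ := by finiteness [l2Norm_invAbs_ne_top]
  have hKC : K ≤ ENNReal.ofReal (K.toReal + 1) := by
    rw [ENNReal.ofReal_add ENNReal.toReal_nonneg zero_le_one, ENNReal.ofReal_toReal hK]
    exact le_self_add
  refine ⟨K.toReal + 1, by positivity, ?_⟩
  rintro ε - t - N hN a b - -
  have hN0 : 0 < N := one_pos.trans_le hN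
  set A := ENNReal.ofReal ∘ weightedAmp s t ε a
  set B := ENNReal.ofReal ∘ weightedAmp s t ε b
  calc _ ≤ l2Norm (fun k => ENNReal.ofReal (2 ^ (s / 2) / 3) * ENNReal.ofReal N⁻¹ *
          (discreteConv (invAbs * A) B + discreteConv A (invAbs * B)) k) :=
        ENNReal.rpow_le_rpow (ENNReal.tsum_le_tsum fun k =>
          weighted_sq_enorm_bilinearG_le ε t a b hs hN0 k) (by norm_num)
    _ ≤ ENNReal.ofReal (2 ^ (s / 2) / 3) * ENNReal.ofReal N⁻¹ *
          (2 * l2Norm invAbs * l2Norm A * l2Norm B) := by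
        rw [l2Norm_const_mul]; gcongr; exact l2Norm_discreteConv_add_le _ _ _
    _ = K * ENNReal.ofReal N⁻¹ * l2Norm A * l2Norm B := by ring
    _ ≤ _ := by rw [HsE_eq_l2Norm_weightedAmp, HsE_eq_l2Norm_weightedAmp]; gcongr
end
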